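/- arXiv:1307.6662 — 4 statements merged into one kernel-verified Lean document; each statement's English description precedes it below -/
import Mathlib

section
/- Let G = PSL₂(q) with q > 2 even, and let C be the G-conjugacy class of a nontrivial semisimple element x whose order divides q − 1. Then C² = G. -/
/-!
Lift `x` to `X ∈ SL₂(F)`; in characteristic 2 the center of `SL₂(F)` is trivial, so
`X ^ (q - 1) = 1`. Then `X` has an eigenvalue `α ∈ Fˣ`, because
`∏_{a ∈ F} det (X - a) = det (X ^ q - X) = 0`, and `α ≠ α⁻¹`, because in characteristic 2 a
trace-zero element of `SL₂(F)` squares to `1`. Every element of trace `α + α⁻¹` is conjugate to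
`diag(α, α⁻¹)`, so the class of `X` is the set of elements of that trace. Every `g ≠ 1` is
conjugate to a matrix with nonzero upper right entry, and such a matrix is the product of
`[[α, 0], [c, α⁻¹]]`, for a suitable `c`, with an element of the same trace; finally
`1 = diag(α, α⁻¹) * diag(α, α⁻¹)⁻¹`.
-/

open Matrix
open scoped MatrixGroups Pointwise

open Polynomial in
theorem Matrix.exists_det_sub_scalar_eq_zero_of_pow_card_eq_self {n F : Type*} [Fintype n]
    [DecidableEq n] [Nonempty n] [Field F] [Fintype F] (M : Matrix n n F)
    (hM : M ^ Fintype.card F = M) : ∃ a : F, (M - scalar n a).det = 0 := by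
  let φ : F[X] →* F := detMonoidHom.comp (aeval M).toMonoidHom
  have hprod : ∏ a : F, (X - C a) = (X ^ Fintype.card F - X : F[X]) := by
    have h := prod_multiset_X_sub_C_of_monic_of_roots_card_eq
      (p := (X ^ Fintype.card F - X : F[X]))
      (monic_X_pow_sub (by rw [degree_X]; exact_mod_cast Fintype.one_lt_card))
      (by rw [FiniteField.roots_X_pow_card_sub_X,
        FiniteField.X_pow_card_sub_X_natDegree_eq F Fintype.one_lt_card]; rfl)
    rwa [FiniteField.roots_X_pow_card_sub_X] at h
  have h0 : ∏ a : F, φ (X - C a) = 0 := by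
    rw [← map_prod, hprod]
    simp [φ, hM]
  obtain ⟨a, -, ha⟩ := Finset.prod_eq_zero_iff.mp h0
  exact ⟨a, by simpa [φ, Algebra.algebraMap_eq_smul_one, smul_one_eq_diagonal] using ha⟩

theorem conjugatesOf_mul_self_eq_univ_of_surjective {G H : Type*} [Monoid G] [Monoid H]
    (f : G →* H) (hf : Function.Surjective f) {a : G}
    (ha : conjugatesOf a * conjugatesOf a = Set.univ) :
    conjugatesOf (f a) * conjugatesOf (f a) = Set.univ := by
  refine Set.eq_univ_of_forall fun y => ?_
  obtain ⟨x, rfl⟩ := hf y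
  obtain ⟨b, hb, c, hc, rfl⟩ := Set.mem_mul.mp (ha ▸ Set.mem_univ x)
  rw [map_mul]
  exact Set.mul_mem_mul (f.map_isConj hb) (f.map_isConj hc)

namespace Matrix.SpecialLinearGroup

section CommRing

variable {n R : Type*} [Fintype n] [DecidableEq n] [CommRing R]

theorem trace_conj (k A : SpecialLinearGroup n R) :
    (↑(k * A * k⁻¹) : Matrix n n R).trace = (A : Matrix n n R).trace := by
  rw [coe_mul, trace_mul_comm, ← coe_mul, inv_mul_cancel_left]

def traceFiber (t : R) : Set (SpecialLinearGroup n R) :=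
  {A | (A : Matrix n n R).trace = t}

@[simp]
theorem mem_traceFiber {t : R} {A : SpecialLinearGroup n R} :
    A ∈ traceFiber t ↔ (A : Matrix n n R).trace = t :=
  Iff.rfl

theorem mem_traceFiber_of_isConj {t : R} {A B : SpecialLinearGroup n R} (hA : A ∈ traceFiber t)
    (h : IsConj A B) : B ∈ traceFiber t := by
  obtain ⟨k, rfl⟩ := isConj_iff.mp h
  rwa [mem_traceFiber, trace_conj]

theorem mem_traceFiber_mul_of_isConj {t : R} {g g' : SpecialLinearGroup n R}
    (hg : g ∈ traceFiber t * traceFiber t) (h : IsConj g g') :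
    g' ∈ traceFiber t * traceFiber t := by
  obtain ⟨k, rfl⟩ := isConj_iff.mp h
  obtain ⟨A, hA, B, hB, rfl⟩ := Set.mem_mul.mp hg
  refine ⟨k * A * k⁻¹, mem_traceFiber_of_isConj hA (isConj_iff.mpr ⟨k, rfl⟩),
    k * B * k⁻¹, mem_traceFiber_of_isConj hB (isConj_iff.mpr ⟨k, rfl⟩), ?_⟩
  group

end CommRing

variable {F : Type*} [Field F]

theorem det_eq_one_fin_two (g : SL(2, F)) :
    (g : Matrix (Fin 2) (Fin 2) F) 0 0 * (g : Matrix (Fin 2) (Fin 2) F) 1 1 -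
      (g : Matrix (Fin 2) (Fin 2) F) 0 1 * (g : Matrix (Fin 2) (Fin 2) F) 1 0 = 1 := by
  rw [← det_fin_two, det_coe]

theorem exists_coe_eq_fin_two (A : SL(2, F)) :
    ∃ a b c d : F, a * d - b * c = 1 ∧ (A : Matrix (Fin 2) (Fin 2) F) = !![a, b; c, d] :=
  ⟨_, _, _, _, det_eq_one_fin_two A, eta_fin_two _⟩

def diagUnits (α : Fˣ) : SL(2, F) :=
  ⟨!![(α : F), 0; 0, (α : F)⁻¹], by simp [det_fin_two_of]⟩

@[simp]
theorem coe_diagUnits (α : Fˣ) :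
    (diagUnits α : Matrix (Fin 2) (Fin 2) F) = !![(α : F), 0; 0, (α : F)⁻¹] :=
  rfl

theorem diagUnits_mem_traceFiber (α : Fˣ) : diagUnits α ∈ traceFiber ((α : F) + (α : F)⁻¹) := by
  rw [mem_traceFiber, coe_diagUnits, trace_fin_two_of]

theorem notMem_center_of_mem_traceFiber {α : Fˣ} (hα : (α : F) ≠ (α : F)⁻¹) {A : SL(2, F)}
    (hA : A ∈ traceFiber ((α : F) + (α : F)⁻¹)) : A ∉ Subgroup.center SL(2, F) := by
  intro hc
  obtain ⟨r, hr2, hr⟩ := mem_center_iff.mp hc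
  simp only [mem_traceFiber, trace_fin_two, ← hr, scalar_apply, diagonal_apply_eq,
    Fintype.card_fin] at hA hr2
  have hαr : (α : F) = r := by
    have : ((α : F) - r) ^ 2 = 0 := by
      linear_combination (-(α : F)) * hA + hr2 - mul_inv_cancel₀ α.ne_zero
    exact sub_eq_zero.mp (pow_eq_zero_iff two_ne_zero |>.mp this)
  apply hα
  linear_combination 2 * hαr + hA

theorem exists_isConj_apply_zero_one_ne_zero {g : SL(2, F)}
    (hg : g ∉ Subgroup.center SL(2, F)) :
    ∃ g' : SL(2, F), IsConj g g' ∧ (g' : Matrix (Fin 2) (Fin 2) F) 0 1 ≠ 0 := by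
  by_cases hq : (g : Matrix (Fin 2) (Fin 2) F) 0 1 = 0
  swap
  · exact ⟨g, .refl g, hq⟩
  by_cases hr : (g : Matrix (Fin 2) (Fin 2) F) 1 0 = 0
  · have hps : (g : Matrix (Fin 2) (Fin 2) F) 0 0 ≠ (g : Matrix (Fin 2) (Fin 2) F) 1 1 := by
      intro hps
      refine hg (mem_center_iff.mpr ⟨(g : Matrix (Fin 2) (Fin 2) F) 0 0, ?_, ?_⟩)
      · simpa [hq, sq, ← hps] using det_eq_one_fin_two g
      · ext i j
        fin_cases i <;> fin_cases j <;> simp [hq, hr, hps]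
    let u : SL(2, F) := ⟨!![1, 1; 0, 1], by simp [det_fin_two_of]⟩
    refine ⟨u * g * u⁻¹, isConj_iff.mpr ⟨u, rfl⟩, ?_⟩
    rw [coe_mul, coe_mul, coe_inv]
    simpa [u, adjugate_fin_two, mul_apply, vecMul, dotProduct, Fin.sum_univ_two, hq, hr,
      neg_add_eq_zero] using hps
  · let w : SL(2, F) := ⟨!![0, -1; 1, 0], by simp [det_fin_two_of]⟩
    refine ⟨w * g * w⁻¹, isConj_iff.mpr ⟨w, rfl⟩, ?_⟩
    rw [coe_mul, coe_mul, coe_inv]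
    simpa [w, adjugate_fin_two, mul_apply, vecMul, dotProduct, Fin.sum_univ_two]

theorem isConj_diagUnits_of_apply_zero_one_ne_zero {α : Fˣ} (hα : (α : F) ≠ (α : F)⁻¹)
    {A : SL(2, F)} (hA : A ∈ traceFiber ((α : F) + (α : F)⁻¹))
    (hb : (A : Matrix (Fin 2) (Fin 2) F) 0 1 ≠ 0) : IsConj (diagUnits α) A := by
  obtain ⟨a, b, c, d, hdet, hA'⟩ := exists_coe_eq_fin_two A
  rw [mem_traceFiber, hA', trace_fin_two_of] at hA
  rw [hA', of_apply, cons_val', cons_val_zero, cons_val_one, cons_val_fin_one] at hb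
  obtain ⟨β, hβ⟩ : ∃ β, (α : F)⁻¹ = β := ⟨_, rfl⟩
  have hαβ : (α : F) * β = 1 := hβ ▸ mul_inv_cancel₀ α.ne_zero
  have hβα : β - α ≠ 0 := sub_ne_zero.mpr (hβ ▸ Ne.symm hα)
  rw [hβ] at hA
  -- the columns of the conjugating matrix are eigenvectors of `A` for `α` and `β`
  let P : SL(2, F) := ⟨!![b, 1 / (β - α); α - a, (β - a) / (b * (β - α))],
    by rw [det_fin_two_of]; field_simp; ring⟩
  refine isConj_iff.mpr ⟨P, mul_inv_eq_of_eq_mul (Subtype.ext ?_)⟩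
  rw [coe_mul, coe_mul, coe_diagUnits, hA', hβ, coe_mk, mul_fin_two, mul_fin_two]
  simp only [EmbeddingLike.apply_eq_iff_eq, vecCons_inj, and_true]
  refine ⟨⟨?_, ?_⟩, ?_, ?_⟩
  · ring
  · field_simp
    ring
  · linear_combination hdet - α * hA - hαβ
  · field_simp
    linear_combination hdet - β * hA - hαβ

theorem conjugatesOf_diagUnits {α : Fˣ} (hα : (α : F) ≠ (α : F)⁻¹) :
    conjugatesOf (diagUnits α) = traceFiber ((α : F) + (α : F)⁻¹) := by
  ext A
  refine ⟨mem_traceFiber_of_isConj (diagUnits_mem_traceFiber α), fun hA => ?_⟩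
  obtain ⟨A', hAA', hb⟩ :=
    exists_isConj_apply_zero_one_ne_zero (notMem_center_of_mem_traceFiber hα hA)
  exact (isConj_diagUnits_of_apply_zero_one_ne_zero hα (mem_traceFiber_of_isConj hA hAA') hb).trans
    hAA'.symm

theorem conjugatesOf_eq_traceFiber {α : Fˣ} (hα : (α : F) ≠ (α : F)⁻¹) {A : SL(2, F)}
    (hA : A ∈ traceFiber ((α : F) + (α : F)⁻¹)) :
    conjugatesOf A = traceFiber ((α : F) + (α : F)⁻¹) := by
  rw [← conjugatesOf_diagUnits hα] at hA ⊢
  exact (isConj_iff_conjugatesOf_eq.mp hA).symm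

theorem mem_traceFiber_mul_of_apply_zero_one_ne_zero (α : Fˣ) {g : SL(2, F)}
    (hg : (g : Matrix (Fin 2) (Fin 2) F) 0 1 ≠ 0) :
    g ∈ traceFiber ((α : F) + (α : F)⁻¹) * traceFiber ((α : F) + (α : F)⁻¹) := by
  obtain ⟨p, q, r, s, hdet, hg'⟩ := exists_coe_eq_fin_two g
  rw [hg', of_apply, cons_val', cons_val_zero, cons_val_one, cons_val_fin_one] at hg
  -- the lower left entry of `A` is chosen so that `A⁻¹ * g` has trace `α + α⁻¹` as well
  let A : SL(2, F) := ⟨!![(α : F), 0; ((α : F)⁻¹ * p + α * s - α - (α : F)⁻¹) / q, (α : F)⁻¹],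
    by simp [det_fin_two_of]⟩
  refine ⟨A, by rw [mem_traceFiber, coe_mk, trace_fin_two_of], A⁻¹ * g, ?_,
    mul_inv_cancel_left A g⟩
  rw [mem_traceFiber, coe_mul, coe_inv, hg', coe_mk, adjugate_fin_two_of, mul_fin_two,
    trace_fin_two_of]
  field_simp
  ring

theorem mem_traceFiber_mul_of_notMem_center (α : Fˣ) {g : SL(2, F)}
    (hg : g ∉ Subgroup.center SL(2, F)) :
    g ∈ traceFiber ((α : F) + (α : F)⁻¹) * traceFiber ((α : F) + (α : F)⁻¹) := by
  obtain ⟨g', hgg', hg'⟩ := exists_isConj_apply_zero_one_ne_zero hg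
  exact mem_traceFiber_mul_of_isConj (mem_traceFiber_mul_of_apply_zero_one_ne_zero α hg')
    hgg'.symm

theorem one_mem_traceFiber_mul (α : Fˣ) :
    (1 : SL(2, F)) ∈ traceFiber ((α : F) + (α : F)⁻¹) * traceFiber ((α : F) + (α : F)⁻¹) := by
  refine ⟨diagUnits α, diagUnits_mem_traceFiber α, (diagUnits α)⁻¹, ?_, mul_inv_cancel _⟩
  rw [mem_traceFiber, coe_inv, coe_diagUnits, adjugate_fin_two_of, trace_fin_two_of, add_comm]

section CharTwo

variable [CharP F 2]

theorem center_eq_bot_of_charTwo : Subgroup.center SL(2, F) = ⊥ := by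
  refine (Subgroup.eq_bot_iff_forall _).mpr fun g hg => ?_
  obtain ⟨r, hr2, hr⟩ := mem_center_iff.mp hg
  obtain rfl : r = 1 := CharTwo.sq_injective (by simpa using hr2)
  exact Subtype.ext (by rw [← hr, map_one, coe_one])

theorem mul_self_eq_one_of_mem_traceFiber_zero {A : SL(2, F)} (hA : A ∈ traceFiber (0 : F)) :
    A * A = 1 := by
  obtain ⟨a, b, c, d, hdet, hA'⟩ := exists_coe_eq_fin_two A
  rw [mem_traceFiber, hA', trace_fin_two_of] at hA
  refine Subtype.ext ?_
  rw [coe_mul, coe_one, hA', mul_fin_two, one_fin_two]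
  -- Cayley–Hamilton: `A² = (tr A) A - 1`, and `-1 = 1`
  have h2 : (2 : F) = 0 := CharTwo.two_eq_zero
  simp only [EmbeddingLike.apply_eq_iff_eq, vecCons_inj, and_true]
  refine ⟨⟨?_, ?_⟩, ?_, ?_⟩
  · linear_combination a * hA - hdet - h2
  · linear_combination b * hA
  · linear_combination c * hA
  · linear_combination d * hA - hdet - h2

theorem traceFiber_mul_self_eq_univ_of_charTwo (α : Fˣ) :
    (traceFiber ((α : F) + (α : F)⁻¹) * traceFiber ((α : F) + (α : F)⁻¹) : Set SL(2, F)) =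
      Set.univ := by
  refine Set.eq_univ_of_forall fun (g : SL(2, F)) => ?_
  by_cases hg : g = 1
  · exact hg ▸ one_mem_traceFiber_mul α
  · refine mem_traceFiber_mul_of_notMem_center α ?_
    rwa [center_eq_bot_of_charTwo, Subgroup.mem_bot]

theorem injective_mk'_center_of_charTwo :
    Function.Injective (QuotientGroup.mk' (Subgroup.center SL(2, F))) :=
  (MonoidHom.ker_eq_bot_iff _).mp (by rw [QuotientGroup.ker_mk', center_eq_bot_of_charTwo])

end CharTwo

theorem exists_mem_traceFiber_of_pow_card_eq_self [Fintype F] {A : SL(2, F)}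
    (hA : A ^ Fintype.card F = A) : ∃ α : Fˣ, A ∈ traceFiber ((α : F) + (α : F)⁻¹) := by
  obtain ⟨x, hx⟩ :=
    (A : Matrix (Fin 2) (Fin 2) F).exists_det_sub_scalar_eq_zero_of_pow_card_eq_self
      (by rw [← coe_pow, hA])
  simp only [det_fin_two, sub_apply, scalar_apply, diagonal_apply_eq,
    diagonal_apply_ne _ zero_ne_one, diagonal_apply_ne _ one_ne_zero, sub_zero] at hx
  have hdet := det_eq_one_fin_two A
  have hx0 : x ≠ 0 := by
    rintro rfl
    exact one_ne_zero (α := F) (by linear_combination hx - hdet)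
  refine ⟨Units.mk0 x hx0, ?_⟩
  rw [mem_traceFiber, trace_fin_two, Units.val_mk0]
  field_simp
  linear_combination hdet - hx

end Matrix.SpecialLinearGroup

open Matrix.SpecialLinearGroup in
theorem psl2_even_split_semisimple_sq_eq_univ_general
    {F : Type*} [Field F] [Fintype F] [CharP F 2]
    (x : PSL(2, F)) (hx1 : x ≠ 1) (hx2 : orderOf x ≠ 2)
    (hdvd : orderOf x ∣ Fintype.card F - 1)
    (C : Set PSL(2, F)) (hC : C = {h | IsConj x h}) :
    C * C = Set.univ := by
  subst hC
  obtain ⟨X, rfl⟩ := QuotientGroup.mk'_surjective (Subgroup.center SL(2, F)) x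
  rw [orderOf_injective _ injective_mk'_center_of_charTwo] at hx2 hdvd
  have hX1 : X ≠ 1 := fun h => hx1 (by rw [h, map_one])
  have hXq : X ^ Fintype.card F = X := by
    rw [← Nat.sub_add_cancel Fintype.card_pos, pow_succ, orderOf_dvd_iff_pow_eq_one.mp hdvd,
      one_mul]
  obtain ⟨α, hα⟩ := exists_mem_traceFiber_of_pow_card_eq_self hXq
  have hαα : (α : F) ≠ (α : F)⁻¹ := by
    intro h
    have hXX := mul_self_eq_one_of_mem_traceFiber_zero
      (by rwa [← h, CharTwo.add_self_eq_zero] at hα)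
    exact hx2 (orderOf_eq_prime (by rwa [sq]) hX1)
  refine conjugatesOf_mul_self_eq_univ_of_surjective _ (QuotientGroup.mk'_surjective _) ?_
  rw [conjugatesOf_eq_traceFiber hαα hα]
  exact traceFiber_mul_self_eq_univ_of_charTwo α

/-- For `G = PSL₂(q)`, `q > 2` even: if `x` is a nontrivial semisimple element whose
order divides `q - 1`, then `C² = G` where `C` is the conjugacy class of `x`. -/
theorem psl2_even_split_semisimple_sq_eq_univ
    {F : Type*} [Field F] [Fintype F] [DecidableEq F] [CharP F 2]
    (hq : 2 < Fintype.card F)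
    (x : PSL(2, F)) (hx1 : x ≠ 1) (hx2 : orderOf x ≠ 2)
    (hdvd : orderOf x ∣ Fintype.card F - 1)
    (C : Set PSL(2, F)) (hC : C = {h | IsConj x h}) :
    C * C = Set.univ :=
  psl2_even_split_semisimple_sq_eq_univ_general x hx1 hx2 hdvd C hC
end

section
/- Let G = PSL₂(q) with q > 3 odd, and let C be the G-conjugacy class of a semisimple element x of order greater than 2. Then C² = G. -/
open Matrix
open scoped MatrixGroups Pointwise

/-!
Lift `x` to `y ∈ SL₂(q)` of trace `t`. If `t = ±2` then `±y` is unipotent, and if `t = 0` then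
`y² = -1`; so `t ≠ 0` and `t² ≠ 4`. Then `y` is conjugate to the companion matrix `K` of
`X² - tX + 1` by some `P ∈ GL₂`, and `P` can be corrected to lie in `SL₂` by an element of the
centraliser `F[K]`, whose determinant `a² + abt + b²` takes every value in `F`. Hence the
elements of trace `t` form a single `SL₂`-class, and it suffices to write every `M ∈ SL₂` as
`A (A⁻¹ M)` with `tr A = t` and `tr (A⁻¹ M) = t tr M - tr (A M) = ±t`. After conjugating `M` to
its companion matrix this is a single quadratic equation in two unknowns, which over a finite
field of odd order always has a solution.
-/

lemma FiniteField.exists_sq_eq_quadratic {F : Type*} [Field F] [Fintype F] (hF : ringChar F ≠ 2)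
    {a b : F} (c : F) (h : a ≠ 0 ∨ b ≠ 0) : ∃ x y : F, y ^ 2 = a * x ^ 2 + b * x + c := by
  rcases eq_or_ne a 0 with rfl | ha
  · have hb := h.resolve_left (not_not.mpr rfl)
    exact ⟨-c / b, 0, by field_simp; ring⟩
  · open Polynomial in
    obtain ⟨x, y, hxy⟩ := FiniteField.exists_root_sum_quadratic
      (f := C a * X ^ 2 + C b * X + C c) (g := -X ^ 2) (degree_quadratic ha)
      ((degree_neg _).trans (degree_X_pow 2)) (FiniteField.odd_card_of_char_ne_two hF)
    simp only [eval_add, eval_mul, eval_pow, eval_C, eval_X, eval_neg] at hxy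
    exact ⟨x, y, by linear_combination -hxy⟩

namespace Matrix

section CommRing

variable {R : Type*} [CommRing R]

local notation "M₂" => Matrix (Fin 2) (Fin 2) R

lemma sq_fin_two (A : M₂) : A ^ 2 = A.trace • A - A.det • 1 := by
  ext i j
  fin_cases i <;> fin_cases j <;>
    simp [sq, mul_apply, Fin.sum_univ_two, trace_fin_two, det_fin_two] <;> ring

def companionFinTwo (d t : R) : M₂ := !![0, -d; 1, t]

@[simp] lemma det_companionFinTwo (d t : R) : (companionFinTwo d t).det = d := by
  simp [companionFinTwo, det_fin_two_of]

@[simp] lemma trace_companionFinTwo (d t : R) : (companionFinTwo d t).trace = t := by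
  simp [companionFinTwo, trace_fin_two]

namespace SpecialLinearGroup

def companion (t : R) : SL(2, R) := ⟨companionFinTwo 1 t, det_companionFinTwo 1 t⟩

@[simp] lemma trace_companion (t : R) : (companion t : M₂).trace = t :=
  trace_companionFinTwo 1 t

lemma trace_inv_mul (A B : SL(2, R)) :
    (↑(A⁻¹ * B) : M₂).trace = (A : M₂).trace * (B : M₂).trace - (↑(A * B) : M₂).trace := by
  simp only [coe_mul, coe_inv, adjugate_fin_two, trace_fin_two, mul_apply, Fin.sum_univ_two]
  simp
  ring

lemma pow_char_eq_one_of_trace_eq_two (p : ℕ) [Fact p.Prime] [CharP R p] (u : SL(2, R))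
    (hu : (u : M₂).trace = 2) : u ^ p = 1 := by
  have hN : ((u : M₂) - 1) ^ 2 = 0 := by
    calc ((u : M₂) - 1) ^ 2 = (u : M₂) ^ 2 - 2 • (u : M₂) + 1 := by noncomm_ring
      _ = 0 := by rw [sq_fin_two, hu, u.2, one_smul, two_smul, two_smul]; abel
  have hNp : ((u : M₂) - 1) ^ p = 0 :=
    pow_eq_zero_of_le (Fact.out : p.Prime).two_le hN
  apply Subtype.ext
  rw [coe_pow, coe_one, ← add_sub_cancel (1 : M₂) u, add_pow_char_of_commute _ (Commute.one_left _),
    one_pow, hNp, add_zero]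

end SpecialLinearGroup

end CommRing

variable {F : Type*} [Field F]

local notation "M₂" => Matrix (Fin 2) (Fin 2) F

lemma exists_units_conj_companionFinTwo (A : M₂) (hA : ∀ r, A ≠ scalar (Fin 2) r) :
    ∃ P : M₂ˣ, (P : M₂) * companionFinTwo A.det A.trace * (↑P⁻¹ : M₂) = A := by
  set cyclic : (Fin 2 → F) → M₂ := fun v ↦ !![v 0, (A *ᵥ v) 0; v 1, (A *ᵥ v) 1]
  have hcyclic : ∀ v, A * cyclic v = cyclic v * companionFinTwo A.det A.trace := by
    intro v
    ext i j
    fin_cases i <;> fin_cases j <;>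
      simp [cyclic, companionFinTwo, mul_apply, mulVec, dotProduct, Fin.sum_univ_two, det_fin_two,
        trace_fin_two] <;> ring
  -- a non-scalar matrix has one of `e₀`, `e₁`, `e₀ + e₁` as a cyclic vector
  obtain ⟨v, hv⟩ : ∃ v, (cyclic v).det ≠ 0 := by
    by_contra! h
    have h0 := h ![1, 0]
    have h1 := h ![0, 1]
    have h2 := h ![1, 1]
    simp only [cyclic, det_fin_two_of, mulVec, dotProduct, Fin.sum_univ_two] at h0 h1 h2
    simp at h0 h1 h2
    apply hA (A 0 0)
    ext i j
    fin_cases i <;> fin_cases j <;> simp [h0, h1]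
    linear_combination h2 - h0 + h1
  have hP : IsUnit (cyclic v) := (isUnit_iff_isUnit_det _).mpr (isUnit_iff_ne_zero.mpr hv)
  refine ⟨hP.unit, ?_⟩
  have h := hcyclic v
  rw [← hP.unit_spec] at h
  rw [← h, Units.mul_inv_cancel_right]

lemma exists_det_eq_commute_companionFinTwo [Fintype F] (hF : ringChar F ≠ 2) {t : F}
    (ht : t ^ 2 ≠ 4) (δ : F) : ∃ Z : M₂, Z.det = δ ∧ Commute Z (companionFinTwo 1 t) := by
  -- `Z = a + b K` has determinant `a ^ 2 + a b t + b ^ 2`; complete the square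
  obtain ⟨b, u, hu⟩ := FiniteField.exists_sq_eq_quadratic hF (a := t ^ 2 - 4) (b := 0) (4 * δ)
    (.inl (sub_ne_zero.mpr ht))
  refine ⟨((u - t * b) / 2) • 1 + b • companionFinTwo 1 t, ?_,
    ((Commute.one_left _).smul_left _).add_left ((Commute.refl _).smul_left _)⟩
  have h2 : (2 : F) ≠ 0 := Ring.two_ne_zero hF
  simp [companionFinTwo, det_fin_two]
  field_simp
  linear_combination hu

lemma exists_det_trace_trace_mul_companionFinTwo [Fintype F] (hF : ringChar F ≠ 2) {t τ s : F}
    (h : τ ^ 2 ≠ 4 ∨ 2 * t ≠ s * τ) :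
    ∃ A : M₂, A.det = 1 ∧ A.trace = t ∧ (A * companionFinTwo 1 τ).trace = s := by
  have h2 : (2 : F) ≠ 0 := Ring.two_ne_zero hF
  -- for `A = !![t - d, b; c, d]` the last condition fixes `c`, and then `det A = 1` is a
  -- quadratic equation in `b` whose discriminant has to be a square `w ^ 2`
  obtain ⟨d, w, hw⟩ := FiniteField.exists_sq_eq_quadratic hF (a := τ ^ 2 - 4)
    (b := 2 * (2 * t - s * τ)) (s ^ 2 - 4) <|
      h.imp sub_ne_zero.mpr fun h ↦ mul_ne_zero h2 (sub_ne_zero.mpr h)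
  set b := (w + s - d * τ) / 2
  refine ⟨!![t - d, b; b - s + d * τ, d], ?_, by simp [trace_fin_two], ?_⟩
  · rw [det_fin_two_of]
    simp only [b]
    field_simp
    linear_combination -hw
  · simp [companionFinTwo, trace_fin_two]

lemma exists_det_trace_trace_mul [Fintype F] (hF : ringChar F ≠ 2) {M : M₂}
    (hM : ∀ r, M ≠ scalar (Fin 2) r) (hdet : M.det = 1) {t s : F}
    (h : M.trace ^ 2 ≠ 4 ∨ 2 * t ≠ s * M.trace) :
    ∃ A : M₂, A.det = 1 ∧ A.trace = t ∧ (A * M).trace = s := by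
  obtain ⟨P, hP⟩ := exists_units_conj_companionFinTwo M hM
  obtain ⟨A, hdetA, htrA, hAK⟩ := exists_det_trace_trace_mul_companionFinTwo hF h
  refine ⟨P * A * P⁻¹, by rw [det_units_conj, hdetA], by rw [trace_units_conj, htrA], ?_⟩
  rw [← hP, hdet]
  simp only [Matrix.mul_assoc, Units.inv_mul_cancel_left]
  rw [← Matrix.mul_assoc, ← Matrix.mul_assoc, Matrix.mul_assoc (P : M₂), trace_units_conj, hAK]

namespace SpecialLinearGroup

lemma ne_scalar_of_trace_sq_ne_four (A : SL(2, F)) (hA : (A : M₂).trace ^ 2 ≠ 4) (r : F) :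
    (A : M₂) ≠ scalar (Fin 2) r := by
  intro h
  have hdet := A.2
  rw [h] at hA hdet
  simp at hA hdet
  rcases hdet with rfl | rfl <;> norm_num at hA

lemma isConj_companion [Fintype F] (hF : ringChar F ≠ 2) (A : SL(2, F))
    (hA : (A : M₂).trace ^ 2 ≠ 4) : IsConj (companion (A : M₂).trace) A := by
  obtain ⟨P, hP⟩ := exists_units_conj_companionFinTwo (A : M₂) (ne_scalar_of_trace_sq_ne_four A hA)
  rw [A.2] at hP
  set K := companionFinTwo 1 (A : M₂).trace
  obtain ⟨Z, hZdet, hZK⟩ := exists_det_eq_commute_companionFinTwo hF hA (P : M₂).det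
  lift Z to M₂ˣ using (isUnit_iff_isUnit_det _).mpr (hZdet ▸ isUnits_det_units P)
  set S := P * Z⁻¹
  have hS : (S : M₂).det = 1 := by
    rw [Units.val_mul, det_mul, ← hZdet, ← det_mul, Units.mul_inv, det_one]
  have hSK : (S : M₂) * K = A * S := by
    rw [← hP]
    simp only [S, Units.val_mul, Matrix.mul_assoc, Units.inv_mul_cancel_left]
    rw [hZK.units_inv_left.eq]
  exact isConj_iff.mpr ⟨⟨S, hS⟩, mul_inv_eq_iff_eq_mul.mpr (Subtype.coe_injective hSK)⟩

lemma isConj_of_trace_eq [Fintype F] (hF : ringChar F ≠ 2) {A B : SL(2, F)}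
    (h : (A : M₂).trace = (B : M₂).trace) (hA : (A : M₂).trace ^ 2 ≠ 4) : IsConj A B :=
  (isConj_companion hF A hA).symm.trans (h ▸ isConj_companion hF B (h ▸ hA))

lemma exists_trace_eq_trace_inv_mul_eq [Fintype F] (hF : ringChar F ≠ 2) {t : F} (ht : t ≠ 0)
    (M : SL(2, F)) : ∃ A : SL(2, F), (A : M₂).trace = t ∧
      ((↑(A⁻¹ * M) : M₂).trace = t ∨ (↑(A⁻¹ * M) : M₂).trace = -t) := by
  by_cases hM : ∃ r, (M : M₂) = scalar (Fin 2) r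
  · obtain ⟨r, hr⟩ := hM
    have hr2 : r = 1 ∨ r = -1 := by simpa [hr] using M.2
    refine ⟨companion t, trace_companion t, ?_⟩
    rw [trace_inv_mul, coe_mul, hr, scalar_apply, ← smul_one_eq_diagonal]
    simp only [Matrix.mul_smul, trace_smul, mul_one, trace_one, trace_companion, smul_eq_mul]
    rcases hr2 with rfl | rfl
    · left; simp; ring
    · right; simp; ring
  push Not at hM
  have h2 : (2 : F) ≠ 0 := Ring.two_ne_zero hF
  have h4t : 2 * 2 * t ≠ 0 := mul_ne_zero (mul_ne_zero h2 h2) ht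
  set τ := (M : M₂).trace
  obtain ⟨ε, hε, hτ⟩ : ∃ ε : F, (ε = 1 ∨ ε = -1) ∧ (τ ^ 2 ≠ 4 ∨ 2 * t ≠ t * (τ - ε) * τ) := by
    rcases eq_or_ne τ 2 with hτ2 | hτ2
    · exact ⟨-1, .inr rfl, .inr fun h ↦ h4t (by rw [hτ2] at h; linear_combination -h)⟩
    refine ⟨1, .inl rfl, not_and_or.mp fun ⟨h, h'⟩ ↦ ?_⟩
    have hτ : τ = -2 := by
      have : (τ - 2) * (τ + 2) = 0 := by linear_combination h
      linear_combination (mul_eq_zero.mp this).resolve_left (sub_ne_zero.mpr hτ2)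
    exact h4t (by rw [hτ] at h'; linear_combination -h')
  obtain ⟨A, hdetA, htrA, hAM⟩ := exists_det_trace_trace_mul hF hM M.2 hτ
  set A' : SL(2, F) := ⟨A, hdetA⟩
  have hA' : (A' : M₂) = A := rfl
  refine ⟨A', htrA, ?_⟩
  rw [trace_inv_mul, coe_mul, hA', htrA, hAM]
  rcases hε with rfl | rfl
  · left; ring
  · right; ring

end SpecialLinearGroup

end Matrix

namespace Matrix.ProjectiveSpecialLinearGroup

section CommRing

variable {R : Type*} [CommRing R]

local notation "M₂" => Matrix (Fin 2) (Fin 2) R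

lemma coe_neg (y : SL(2, R)) : ((-y : SL(2, R)) : PSL(2, R)) = y :=
  QuotientGroup.eq.mpr <| Subgroup.mem_center_iff.mpr fun g ↦ by simp

lemma coe_sq_eq_one_of_trace_eq_zero (y : SL(2, R)) (hy : (y : M₂).trace = 0) :
    (y : PSL(2, R)) ^ 2 = 1 := by
  have hy2 : y ^ 2 = -1 := by
    apply Subtype.ext
    rw [SpecialLinearGroup.coe_pow, sq_fin_two, hy, y.2, zero_smul, one_smul, zero_sub,
      SpecialLinearGroup.coe_neg, SpecialLinearGroup.coe_one]
  rw [← QuotientGroup.mk_pow, hy2, coe_neg, QuotientGroup.mk_one]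

end CommRing

variable {F : Type*} [Field F]

local notation "M₂" => Matrix (Fin 2) (Fin 2) F

lemma coe_pow_char_eq_one_of_trace_sq_eq_four (p : ℕ) [Fact p.Prime] [CharP F p]
    (y : SL(2, F)) (hy : (y : M₂).trace ^ 2 = 4) : (y : PSL(2, F)) ^ p = 1 := by
  have : ((y : M₂).trace - 2) * ((y : M₂).trace + 2) = 0 := by linear_combination hy
  rcases mul_eq_zero.mp this with h | h
  · rw [← QuotientGroup.mk_pow, SpecialLinearGroup.pow_char_eq_one_of_trace_eq_two p y
      (by linear_combination h), QuotientGroup.mk_one]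
  · rw [← coe_neg, ← QuotientGroup.mk_pow, SpecialLinearGroup.pow_char_eq_one_of_trace_eq_two p (-y)
      (by rw [SpecialLinearGroup.coe_neg, trace_neg]; linear_combination -h), QuotientGroup.mk_one]

lemma isConj_coe_of_trace_eq_or_eq_neg [Fintype F] (hF : ringChar F ≠ 2) {y A : SL(2, F)}
    (hy : (y : M₂).trace ^ 2 ≠ 4)
    (hA : (A : M₂).trace = (y : M₂).trace ∨ (A : M₂).trace = -(y : M₂).trace) :
    IsConj (y : PSL(2, F)) A := by
  rcases hA with hA | hA
  · exact (QuotientGroup.mk' _).map_isConj (SpecialLinearGroup.isConj_of_trace_eq hF hA.symm hy)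
  · rw [← coe_neg]
    refine (QuotientGroup.mk' _).map_isConj (SpecialLinearGroup.isConj_of_trace_eq hF ?_ ?_)
    · rw [SpecialLinearGroup.coe_neg, trace_neg, hA]
    · rwa [SpecialLinearGroup.coe_neg, trace_neg, neg_sq]

theorem conjugatesOf_mul_self_eq_univ [Fintype F] (hF : ringChar F ≠ 2) (y : SL(2, F))
    (h0 : (y : M₂).trace ≠ 0) (h4 : (y : M₂).trace ^ 2 ≠ 4) :
    conjugatesOf (y : PSL(2, F)) * conjugatesOf (y : PSL(2, F)) = Set.univ := by
  refine Set.eq_univ_of_forall fun g ↦ ?_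
  obtain ⟨M, rfl⟩ := QuotientGroup.mk_surjective g
  obtain ⟨A, hA, hB⟩ := SpecialLinearGroup.exists_trace_eq_trace_inv_mul_eq hF h0 M
  rw [← mul_inv_cancel_left A M, QuotientGroup.mk_mul]
  exact Set.mul_mem_mul (isConj_coe_of_trace_eq_or_eq_neg hF h4 (.inl hA))
    (isConj_coe_of_trace_eq_or_eq_neg hF h4 hB)

end Matrix.ProjectiveSpecialLinearGroup

theorem psl2_odd_semisimple_sq_eq_univ_general
    {F : Type*} [Field F] [Fintype F] (p : ℕ) [Fact p.Prime] [CharP F p]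
    (hp : p ≠ 2)
    (x : PSL(2, F)) (hxp : orderOf x ≠ p) (hx2 : 2 < orderOf x)
    (C : Set PSL(2, F)) (hC : C = {h | IsConj x h}) :
    C * C = Set.univ := by
  have hF : ringChar F ≠ 2 := ringChar.eq F p ▸ hp
  obtain ⟨y, rfl⟩ := QuotientGroup.mk_surjective x
  subst hC
  refine ProjectiveSpecialLinearGroup.conjugatesOf_mul_self_eq_univ hF y (fun h0 ↦ ?_) fun h4 ↦ ?_
  · exact hx2.not_ge <| orderOf_le_of_pow_eq_one two_pos <|
      ProjectiveSpecialLinearGroup.coe_sq_eq_one_of_trace_eq_zero y h0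
  · exact hxp <| orderOf_eq_prime
      (ProjectiveSpecialLinearGroup.coe_pow_char_eq_one_of_trace_sq_eq_four p y h4)
      fun h ↦ by simp [h] at hx2

/-- For `G = PSL₂(q)`, `q > 3` odd: if `x` is a semisimple element of order greater
than 2, then `C² = G` where `C` is the conjugacy class of `x`. -/
theorem psl2_odd_semisimple_sq_eq_univ
    {F : Type*} [Field F] [Fintype F] [DecidableEq F] (p : ℕ) [Fact p.Prime] [CharP F p]
    (hp : p ≠ 2) (hq : 3 < Fintype.card F)
    (x : PSL(2, F)) (hx1 : x ≠ 1) (hxp : orderOf x ≠ p) (hx2 : 2 < orderOf x)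
    (C : Set PSL(2, F)) (hC : C = {h | IsConj x h}) :
    C * C = Set.univ :=
  psl2_odd_semisimple_sq_eq_univ_general p hp x hxp hx2 C hC
end

section
/- Let q = p^e be odd, let C ∈ SL₂(q) with trace γ ≠ ±2, and let t be the order of the image of C in PSL₂(q) (so t ≠ p). Then t is a q-good order if and only if at least one of 2 + γ, 2 − γ is a square in F_q. -/
open Matrix
open scoped MatrixGroups Pointwise


/-- `n` is a `q`-good order: `n` is odd and divides `q - 1` or `q + 1`, or
`n` is even and `4n` divides `q - 1` or `q + 1`. -/
def IsQGood (q n : ℕ) : Prop :=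
  1 < n ∧ ((Odd n ∧ (n ∣ q - 1 ∨ n ∣ q + 1)) ∨ (Even n ∧ (4 * n ∣ q - 1 ∨ 4 * n ∣ q + 1)))

/-!
Over an algebraic closure write `γ = λ + λ⁻¹`; then `λ² ≠ 1`, and Cayley–Hamilton gives
`(λ - λ⁻¹) Cᵏ = (λᵏ - λ⁻ᵏ) C + (scalar)`, so `Cᵏ` is scalar iff `λ²ᵏ = 1` and the image of `C`
in `PSL₂(q)` has order `ord(λ²) = ord(λ) / gcd(ord(λ), 2)`. The Frobenius `x ↦ x^q` fixes `γ`,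
hence permutes `{λ, λ⁻¹}`: `λ^q = λ^{±1}`, and `λ^{2n} = 1` where `2n = q ∓ 1`.
Writing `λ = μ²`, `2 + γ = (μ + μ⁻¹)²` and `(μ + μ⁻¹)^{q-1} = λⁿ`, so `2 + γ` is a square iff
`λⁿ = 1`; replacing `λ` by `-λ`, `2 - γ` is a square iff `(-λ)ⁿ = 1`. Hence the right-hand side
says `ord(λ) ∣ n` or `n` odd, and elementary arithmetic shows that this is exactly the
`q`-goodness of `ord(λ) / gcd(ord(λ), 2)`.
-/

theorem isQGood_div_gcd_two_iff {q n m : ℕ} (hn : 2 * n + 1 = q ∨ 2 * n = q + 1)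
    (hm : m ∣ 2 * n) (hm2 : 2 < m) : IsQGood q (m / m.gcd 2) ↔ m ∣ n ∨ Odd n := by
  have hq : 2 * n = q - 1 ∨ 2 * n = q + 1 := by omega
  have hdvd {t : ℕ} (ht : t ∣ 2 * n) : t ∣ q - 1 ∨ t ∣ q + 1 :=
    hq.imp (fun h : 2 * n = q - 1 => h ▸ ht) (fun h : 2 * n = q + 1 => h ▸ ht)
  rcases Nat.even_or_odd' m with ⟨k, rfl | rfl⟩
  · have hk : k ∣ n := (Nat.mul_dvd_mul_iff_left two_pos).mp hm
    rw [Nat.gcd_mul_right_left, Nat.mul_div_cancel_left k two_pos]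
    rcases Nat.even_or_odd' k with ⟨j, rfl | rfl⟩
    · have hn2 : 2 ∣ n := (dvd_mul_right 2 j).trans hk
      have hn : ¬ Odd n := Nat.not_odd_iff_even.mpr (even_iff_two_dvd.mpr hn2)
      -- the one of `q ∓ 1` that is not `2 * n` is `2 * n ± 2`, which is `2` mod `4`
      have hdvd_q : 4 * (2 * j) ∣ q - 1 ∨ 4 * (2 * j) ∣ q + 1 ↔ 4 * (2 * j) ∣ 2 * n := by
        refine ⟨fun h => ?_, hdvd⟩
        have h4 {d : ℕ} (hd : 4 * (2 * j) ∣ d) : 4 ∣ d := (dvd_mul_right 4 _).trans hd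
        rcases hq with hq | hq <;> rw [hq]
        · exact h.resolve_right fun h' => by have := h4 h'; omega
        · exact h.resolve_left fun h' => by have := h4 h'; omega
      simp only [IsQGood, Nat.not_odd_iff_even.mpr (even_two_mul _), even_two_mul, false_and,
        false_or, true_and, hdvd_q, hn, or_false]
      rw [and_iff_right (by omega), show 4 * (2 * j) = 2 * (2 * (2 * j)) by ring,
        Nat.mul_dvd_mul_iff_left two_pos]
    · refine iff_of_true
        ⟨by omega, Or.inl ⟨odd_two_mul_add_one j, hdvd (hk.trans (dvd_mul_left n 2))⟩⟩ ?_
      rcases Nat.even_or_odd n with hn | hn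
      · exact Or.inl (Nat.Coprime.mul_dvd_of_dvd_of_dvd (by simp) (even_iff_two_dvd.mp hn) hk)
      · exact Or.inr hn
  · have hcop : Nat.Coprime (2 * k + 1) 2 := by simp
    rw [hcop.gcd_eq_one, Nat.div_one]
    exact iff_of_true ⟨hm2.trans' one_lt_two, Or.inl ⟨odd_two_mul_add_one k, hdvd hm⟩⟩
      (Or.inl (hcop.dvd_of_dvd_mul_left hm))

theorem pow_eq_one_or_neg_pow_eq_one_iff {R : Type*} [Ring R] [NoZeroDivisors R] {a : R} {n : ℕ}
    (ha : a ^ (2 * n) = 1) : a ^ n = 1 ∨ (-a) ^ n = 1 ↔ a ^ n = 1 ∨ Odd n := by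
  rcases Nat.even_or_odd n with hn | hn
  · simp [hn.neg_pow, Nat.not_odd_iff_even.mpr hn]
  · refine iff_of_true ?_ (Or.inr hn)
    rw [hn.neg_pow, neg_eq_iff_eq_neg]
    exact mul_self_eq_one_iff.mp (by rw [← pow_add, ← two_mul, ha])

theorem two_lt_orderOf {M : Type*} [Monoid M] {x : M} {n : ℕ} (hn : 0 < n) (hx : x ^ n = 1)
    (hx2 : x ^ 2 ≠ 1) : 2 < orderOf x := by
  have h0 : 0 < orderOf x := Nat.pos_of_dvd_of_pos (orderOf_dvd_of_pow_eq_one hx) hn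
  have h2 : ¬ orderOf x ∣ 2 := fun h => hx2 (orderOf_dvd_iff_pow_eq_one.mp h)
  by_contra! h
  interval_cases orderOf x <;> simp_all

theorem eq_or_eq_inv_of_add_inv_eq_add_inv {K : Type*} [Field K] {a b : K} (ha : a ≠ 0)
    (hb : b ≠ 0) (h : b + b⁻¹ = a + a⁻¹) : b = a ∨ b = a⁻¹ := by
  have : (b - a) * (b - a⁻¹) = 0 := by
    linear_combination b * h + mul_inv_cancel₀ ha - mul_inv_cancel₀ hb
  simpa [sub_eq_zero] using this

open Polynomial in
theorem exists_algebraMap_eq_add_inv {F K : Type*} [Field F] [Field K] [IsAlgClosed K]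
    [Algebra F K] {x : F} (h2 : x ≠ 2) (h2' : x ≠ -2) :
    ∃ l : K, l ≠ 0 ∧ l ^ 2 ≠ 1 ∧ algebraMap F K x = l + l⁻¹ := by
  obtain ⟨l, hl⟩ := IsAlgClosed.exists_root (X ^ 2 - C (algebraMap F K x) * X + 1 : K[X])
    (by rw [show (X ^ 2 - C _ * X + 1 : K[X]).degree = 2 by compute_degree!]; decide)
  simp only [IsRoot, eval_add, eval_sub, eval_pow, eval_mul, eval_X, eval_C, eval_one] at hl
  have hl0 : l ≠ 0 := by rintro rfl; simp at hl
  have hgl : algebraMap F K x = l + l⁻¹ := by field_simp; linear_combination -hl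
  refine ⟨l, hl0, fun h => ?_, hgl⟩
  rcases mul_self_eq_one_iff.mp (sq l ▸ h) with rfl | rfl
  · exact h2 ((algebraMap F K).injective (by rw [hgl, map_ofNat]; norm_num))
  · exact h2' ((algebraMap F K).injective (by rw [hgl, map_neg, map_ofNat]; norm_num))

theorem pow_card_eq_or_eq_inv {F K : Type*} [Field F] [Fintype F] [Field K] [Algebra F K]
    {x : F} {l : K} (hl : l ≠ 0) (hxl : algebraMap F K x = l + l⁻¹) :
    l ^ Fintype.card F = l ∨ l ^ Fintype.card F = l⁻¹ := by
  set φ := FiniteField.frobeniusAlgHom F K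
  refine eq_or_eq_inv_of_add_inv_eq_add_inv hl (pow_ne_zero _ hl) ?_
  calc l ^ Fintype.card F + (l ^ Fintype.card F)⁻¹
      = φ (l + l⁻¹) := by rw [map_add, map_inv₀, FiniteField.frobeniusAlgHom_apply]
    _ = l + l⁻¹ := by rw [← hxl, φ.commutes]

/-- The split (`l ^ q = l`) and non-split (`l ^ q = l⁻¹`) cases, with `2 * n = q ∓ 1`. -/
def IsFrobeniusHalfExponent {K : Type*} [Field K] (q : ℕ) (l : K) (n : ℕ) : Prop :=
  (l ^ q = l ∧ 2 * n + 1 = q) ∨ (l ^ q = l⁻¹ ∧ 2 * n = q + 1)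

namespace IsFrobeniusHalfExponent

variable {K : Type*} [Field K] {q n : ℕ} {l : K}

theorem exists_of_odd (hq : Odd q) (h : l ^ q = l ∨ l ^ q = l⁻¹) :
    ∃ n, IsFrobeniusHalfExponent q l n := by
  obtain ⟨k, rfl⟩ := hq
  rcases h with h | h
  exacts [⟨k, .inl ⟨h, rfl⟩⟩, ⟨k + 1, .inr ⟨h, by ring⟩⟩]

theorem pow_two_mul_eq_one (h : IsFrobeniusHalfExponent q l n) (hl : l ≠ 0) :
    l ^ (2 * n) = 1 := by
  rcases h with ⟨h, rfl⟩ | ⟨h, hq⟩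
  · exact mul_right_cancel₀ hl (by rw [← pow_succ, h, one_mul])
  · rw [hq, pow_succ, h, inv_mul_cancel₀ hl]

theorem neg (h : IsFrobeniusHalfExponent q l n) : IsFrobeniusHalfExponent q (-l) n := by
  have hq : Odd q := by rcases h with ⟨-, h⟩ | ⟨-, h⟩ <;> rw [Nat.odd_iff] <;> omega
  rw [IsFrobeniusHalfExponent, hq.neg_pow, inv_neg, neg_inj, neg_inj]
  exact h

end IsFrobeniusHalfExponent

theorem isSquare_iff_pow_card_sub_one_eq_one {F K : Type*} [Field F] [Fintype F] [Field K]
    (hF : ringChar F ≠ 2) (f : F →+* K) {x : F} (hx : x ≠ 0) {w : K} (hw : w ^ 2 = f x) :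
    IsSquare x ↔ w ^ (Fintype.card F - 1) = 1 := by
  have hq := FiniteField.odd_card_of_char_ne_two hF
  rw [FiniteField.isSquare_iff hF hx, ← (map_eq_one_iff f f.injective), map_pow, ← hw, ← pow_mul]
  congr! 2
  omega

theorem isSquare_two_add_iff {F K : Type*} [Field F] [Fintype F] [Field K] [IsAlgClosed K]
    [Algebra F K] (hF : ringChar F ≠ 2) {x : F} (hx : x ≠ -2) {l : K} (hl : l ≠ 0)
    (hxl : algebraMap F K x = l + l⁻¹) {n : ℕ}
    (hn : IsFrobeniusHalfExponent (Fintype.card F) l n) : IsSquare (2 + x) ↔ l ^ n = 1 := by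
  obtain ⟨μ, rfl⟩ := IsAlgClosed.exists_pow_nat_eq l two_pos
  have hμ : μ ≠ 0 := by rintro rfl; simp at hl
  set ε := (μ ^ 2) ^ n
  have hε : ε⁻¹ = ε := inv_eq_of_mul_eq_one_right <| by
    rw [← pow_add, ← two_mul, hn.pow_two_mul_eq_one hl]
  have hμq : μ ^ Fintype.card F = ε * μ ∨ μ ^ Fintype.card F = ε * μ⁻¹ := by
    rcases hn with ⟨-, hq⟩ | ⟨-, hq⟩
    · left; rw [← hq, pow_succ, pow_mul]
    · right; rw [eq_mul_inv_iff_mul_eq₀ hμ, ← pow_succ, ← hq, pow_mul]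
  have hνq : (μ + μ⁻¹) ^ Fintype.card F = ε * (μ + μ⁻¹) := by
    rw [← FiniteField.frobeniusAlgHom_apply F, map_add, FiniteField.frobeniusAlgHom_apply,
      FiniteField.frobeniusAlgHom_apply, inv_pow]
    rcases hμq with h | h <;> simp only [h, mul_inv, hε, inv_inv] <;> ring
  have hν : (μ + μ⁻¹) ^ 2 = algebraMap F K (2 + x) := by
    rw [map_add, map_ofNat, hxl]; field_simp; ring
  set ν := μ + μ⁻¹
  have hx2 : 2 + x ≠ 0 := fun h => hx (by linear_combination h)
  have hν0 : ν ≠ 0 := by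
    rintro h; rw [h, zero_pow two_ne_zero, eq_comm, map_eq_zero] at hν; exact hx2 hν
  have hνε : ν ^ (Fintype.card F - 1) = ε :=
    mul_right_cancel₀ hν0 (by rw [← pow_succ, Nat.sub_add_cancel Fintype.card_pos, hνq])
  rw [isSquare_iff_pow_card_sub_one_eq_one hF _ hx2 hν, hνε]

theorem Matrix.sq_eq_trace_smul_sub_det_smul {R : Type*} [CommRing R] [Nontrivial R]
    (M : Matrix (Fin 2) (Fin 2) R) : M ^ 2 = M.trace • M - M.det • 1 := by
  have h := M.aeval_self_charpoly
  rw [M.charpoly_fin_two] at h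
  simp only [map_add, Polynomial.aeval_sub, map_pow, Polynomial.aeval_X, map_mul,
    Polynomial.aeval_C, Algebra.algebraMap_eq_smul_one, Algebra.smul_mul_assoc, one_mul] at h
  rw [← sub_eq_zero, ← h]
  abel

theorem Matrix.sub_smul_pow_eq {R n : Type*} [CommRing R] [Fintype n] [DecidableEq n]
    {M : Matrix n n R} {a b : R} (hM : M ^ 2 = (a + b) • M - (a * b) • 1) (k : ℕ) :
    (a - b) • M ^ k = (a ^ k - b ^ k) • M + (a * b ^ k - b * a ^ k) • 1 := by
  induction k with
  | zero => simp
  | succ k ih =>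
    rw [pow_succ, ← smul_mul_assoc, ih, add_mul, smul_mul_assoc, ← pow_two, hM, smul_mul_assoc,
      one_mul]
    module

theorem Matrix.ne_smul_one_of_trace_det {K : Type*} [Field K] {M : Matrix (Fin 2) (Fin 2) K}
    {a b : K} (hab : a ≠ b) (htr : M.trace = a + b) (hdet : M.det = a * b) (c : K) :
    M ≠ c • 1 := by
  rintro rfl
  simp only [trace_smul, trace_one, Fintype.card_fin, Nat.cast_ofNat, smul_eq_mul,
    det_smul_of_tower, det_one, mul_one] at htr hdet
  apply hab
  have : (a - b) ^ 2 = 0 := by linear_combination -(2 * c + a + b) * htr + 4 * hdet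
  exact sub_eq_zero.mp (pow_eq_zero_iff two_ne_zero |>.mp this)

theorem Matrix.exists_pow_eq_smul_one_iff {K : Type*} [Field K] {M : Matrix (Fin 2) (Fin 2) K}
    {a b : K} (hab : a ≠ b) (htr : M.trace = a + b) (hdet : M.det = a * b) (k : ℕ) :
    (∃ c : K, M ^ k = c • 1) ↔ a ^ k = b ^ k := by
  have h := sub_smul_pow_eq (M := M) (a := a) (b := b)
    (by rw [sq_eq_trace_smul_sub_det_smul, htr, hdet]) k
  have hab' : a - b ≠ 0 := sub_ne_zero.mpr hab
  constructor
  · rintro ⟨c, hc⟩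
    by_contra hk
    have hM : (a ^ k - b ^ k) • M = ((a - b) * c - (a * b ^ k - b * a ^ k)) • 1 := by
      rw [sub_smul ((a - b) * c), mul_smul, ← hc, h]
      abel
    apply ne_smul_one_of_trace_det hab htr hdet ((a ^ k - b ^ k)⁻¹ * _)
    rw [mul_smul, ← hM, smul_smul, inv_mul_cancel₀ (sub_ne_zero.mpr hk), one_smul]
  · intro hk
    rw [hk, sub_self, zero_smul, zero_add] at h
    exact ⟨(a - b)⁻¹ * _, by rw [mul_smul, ← h, smul_smul, inv_mul_cancel₀ hab', one_smul]⟩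

theorem Matrix.SpecialLinearGroup.mk_pow_eq_one_iff {n R : Type*} [Fintype n] [DecidableEq n]
    [CommRing R] (A : SpecialLinearGroup n R) (k : ℕ) :
    (QuotientGroup.mk A : SpecialLinearGroup n R ⧸ Subgroup.center (SpecialLinearGroup n R)) ^ k
      = 1 ↔ ∃ c : R, (A : Matrix n n R) ^ k = c • 1 := by
  rw [← QuotientGroup.mk_pow, QuotientGroup.eq_one_iff, mem_center_iff, ← coe_pow]
  constructor
  · rintro ⟨r, -, hr⟩
    exact ⟨r, by rw [← hr, smul_one_eq_diagonal, scalar_apply]⟩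
  · rintro ⟨c, hc⟩
    refine ⟨c, ?_, by rw [hc, smul_one_eq_diagonal, scalar_apply]⟩
    simpa [det_smul] using (congrArg det hc).symm

theorem RingHom.exists_mapMatrix_eq_smul_one_iff {n R S : Type*} [Fintype n] [DecidableEq n]
    [Nonempty n] [Semiring R] [Semiring S] (f : R →+* S) (hf : Function.Injective f)
    (A : Matrix n n R) : (∃ c : S, f.mapMatrix A = c • 1) ↔ ∃ c : R, A = c • 1 := by
  have hmap (c : R) : f.mapMatrix (c • 1 : Matrix n n R) = f c • 1 := by
    ext i j
    simp [one_apply, apply_ite f]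
  constructor
  · rintro ⟨c, hc⟩
    obtain ⟨i⟩ := ‹Nonempty n›
    have hci : c = f (A i i) := by simpa using (congr_fun₂ hc i i).symm
    exact ⟨A i i, Matrix.map_injective hf
      (show f.mapMatrix A = f.mapMatrix (A i i • 1) by rw [hc, hci, hmap])⟩
  · rintro ⟨c, rfl⟩
    exact ⟨f c, hmap c⟩

theorem inv_pow_eq_pow_iff {G₀ : Type*} [CommGroupWithZero G₀] {l : G₀} (hl : l ≠ 0) (k : ℕ) :
    l ^ k = l⁻¹ ^ k ↔ (l ^ 2) ^ k = 1 := by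
  rw [inv_pow, ← mul_eq_one_iff_eq_inv₀ (pow_ne_zero k hl), ← mul_pow, ← sq]

theorem orderOf_mk_eq_orderOf_sq {F K : Type*} [Field F] [Field K] (f : F →+* K)
    (C : SL(2, F)) {l : K} (hl : l ≠ 0) (hl2 : l ^ 2 ≠ 1)
    (hCl : f (C : Matrix (Fin 2) (Fin 2) F).trace = l + l⁻¹) :
    orderOf (QuotientGroup.mk C : PSL(2, F)) = orderOf (l ^ 2) := by
  set M := f.mapMatrix (C : Matrix (Fin 2) (Fin 2) F)
  have hll : l ≠ l⁻¹ := fun h => hl2 (by rw [sq]; nth_rw 2 [h]; exact mul_inv_cancel₀ hl)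
  have htr : M.trace = l + l⁻¹ := by rw [← hCl, AddMonoidHom.map_trace]; rfl
  have hdet : M.det = l * l⁻¹ := by
    rw [mul_inv_cancel₀ hl, ← RingHom.map_det, Matrix.SpecialLinearGroup.det_coe, map_one]
  refine orderOf_eq_orderOf_iff.mpr fun k => ?_
  rw [SpecialLinearGroup.mk_pow_eq_one_iff, ← f.exists_mapMatrix_eq_smul_one_iff f.injective,
    map_pow, exists_pow_eq_smul_one_iff hll htr hdet, inv_pow_eq_pow_iff hl]

theorem psl2_odd_qGood_iff_square_general
    {F : Type*} [Field F] [Fintype F] (p : ℕ) [CharP F p]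
    (hp : p ≠ 2) (C : SpecialLinearGroup (Fin 2) F)
    (h2 : Matrix.trace (C : Matrix (Fin 2) (Fin 2) F) ≠ 2)
    (h2' : Matrix.trace (C : Matrix (Fin 2) (Fin 2) F) ≠ -2) :
    IsQGood (Fintype.card F) (orderOf (QuotientGroup.mk C : PSL(2, F))) ↔
      (IsSquare (2 + Matrix.trace (C : Matrix (Fin 2) (Fin 2) F)) ∨
        IsSquare (2 - Matrix.trace (C : Matrix (Fin 2) (Fin 2) F))) := by
  have hF : ringChar F ≠ 2 := ringChar.eq F p ▸ hp
  obtain ⟨l, hl, hl2, hγl⟩ := exists_algebraMap_eq_add_inv (K := AlgebraicClosure F) h2 h2'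
  obtain ⟨n, hn⟩ := IsFrobeniusHalfExponent.exists_of_odd
    (Nat.odd_iff.mpr (FiniteField.odd_card_of_char_ne_two hF)) (pow_card_eq_or_eq_inv hl hγl)
  have hln := hn.pow_two_mul_eq_one hl
  have hn0 : 0 < 2 * n := by
    have := Fintype.one_lt_card (α := F)
    rcases hn with ⟨-, h⟩ | ⟨-, h⟩ <;> omega
  rw [orderOf_mk_eq_orderOf_sq _ C hl hl2 hγl, orderOf_pow' l two_ne_zero,
    isQGood_div_gcd_two_iff (hn.imp And.right And.right) (orderOf_dvd_of_pow_eq_one hln)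
      (two_lt_orderOf hn0 hln hl2),
    orderOf_dvd_iff_pow_eq_one, sub_eq_add_neg, isSquare_two_add_iff hF h2' hl hγl hn,
    isSquare_two_add_iff hF (neg_injective.ne h2) (neg_ne_zero.mpr hl)
      (by rw [map_neg, hγl, inv_neg, neg_add]) hn.neg, pow_eq_one_or_neg_pow_eq_one_iff hln]

/-- For odd `q`: if `C ∈ SL₂(q)` has trace `γ ≠ ±2` and its image in `PSL₂(q)` has
order `t`, then `t` is `q`-good iff `2 + γ` or `2 - γ` is a square in `F_q`. -/
theorem psl2_odd_qGood_iff_square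
    {F : Type*} [Field F] [Fintype F] [DecidableEq F] (p : ℕ) [Fact p.Prime] [CharP F p]
    (hp : p ≠ 2) (C : SpecialLinearGroup (Fin 2) F)
    (h2 : Matrix.trace (C : Matrix (Fin 2) (Fin 2) F) ≠ 2)
    (h2' : Matrix.trace (C : Matrix (Fin 2) (Fin 2) F) ≠ -2) :
    IsQGood (Fintype.card F) (orderOf (QuotientGroup.mk C : PSL(2, F))) ↔
      (IsSquare (2 + Matrix.trace (C : Matrix (Fin 2) (Fin 2) F)) ∨
        IsSquare (2 - Matrix.trace (C : Matrix (Fin 2) (Fin 2) F))) :=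
  psl2_odd_qGood_iff_square_general p hp C h2 h2'
end

section
/- Let q be an odd prime power. Call α ∈ F_q a bad trace if α ≠ ±2 and neither 2 + α nor 2 − α is a square in F_q. If q ≡ 1 (mod 4) then F_q contains exactly (q − 1)/4 bad traces, and if q ≡ 3 (mod 4) then F_q contains exactly (q + 1)/4 bad traces. -/
/-!
Write `χ` for the quadratic character of `F`. For `a ≠ 0`, `1 - χ a` is `2` on non-squares and
`0` on squares, so `∑ α, (1 - χ (2 + α)) * (1 - χ (2 - α))` counts every bad trace with
weight `4`; the two terms `α = ±2` vanish because `4` is a square. Expanding the product, the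
linear sums of `χ` vanish and `∑ α, χ (2 + α) * χ (2 - α)` becomes the Jacobi sum
`J(χ, χ) = -χ (-1)` after the substitution `α = 4 t - 2`. Hence `4 · #bad = q - χ (-1)`,
and `χ (-1) = χ₄ q`.
-/

open Finset

def IsBadTrace {F : Type*} [Ring F] (α : F) : Prop :=
  α ≠ 2 ∧ α ≠ -2 ∧ ¬IsSquare (2 + α) ∧ ¬IsSquare (2 - α)

section QuadraticChar

variable {F : Type*} [Field F] [Fintype F] [DecidableEq F]

lemma sum_quadraticChar_mul_quadraticChar_one_sub (hF : ringChar F ≠ 2) :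
    ∑ t : F, quadraticChar F t * quadraticChar F (1 - t) = -quadraticChar F (-1) := by
  simpa [jacobiSum, (quadraticChar_isQuadratic F).inv] using
    jacobiSum_nontrivial_inv (quadraticChar_ne_one hF)

lemma sum_quadraticChar_add_mul_quadraticChar_sub (hF : ringChar F ≠ 2) {c : F} (hc : c ≠ 0) :
    ∑ α : F, quadraticChar F (c + α) * quadraticChar F (c - α) = -quadraticChar F (-1) := by
  have h2c : (2 * c : F) ≠ 0 := mul_ne_zero (Ring.two_ne_zero hF) hc
  have hχ : quadraticChar F (2 * c) * quadraticChar F (2 * c) = 1 := by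
    rw [← pow_two, quadraticChar_sq_one h2c]
  rw [← sum_quadraticChar_mul_quadraticChar_one_sub hF,
    ← ((Equiv.mulLeft₀ (2 * c) h2c).trans (Equiv.subRight c)).sum_comp]
  refine Fintype.sum_congr _ _ fun t => ?_
  change quadraticChar F (c + (2 * c * t - c)) * quadraticChar F (c - (2 * c * t - c)) = _
  rw [show c + (2 * c * t - c) = 2 * c * t by ring,
    show c - (2 * c * t - c) = 2 * c * (1 - t) by ring,
    map_mul (quadraticChar F) (2 * c), map_mul (quadraticChar F) (2 * c)]
  linear_combination (quadraticChar F t * quadraticChar F (1 - t)) * hχ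

lemma sum_one_sub_quadraticChar_add_mul_one_sub_quadraticChar_sub (hF : ringChar F ≠ 2) {c : F}
    (hc : c ≠ 0) :
    ∑ α : F, (1 - quadraticChar F (c + α)) * (1 - quadraticChar F (c - α)) =
      Fintype.card F - quadraticChar F (-1) := by
  have hadd : ∑ α : F, quadraticChar F (c + α) = 0 := by
    rw [← quadraticChar_sum_zero hF]
    exact Fintype.sum_equiv (Equiv.addLeft c) _ _ fun _ => rfl
  have hsub : ∑ α : F, quadraticChar F (c - α) = 0 := by
    rw [← quadraticChar_sum_zero hF]
    exact Fintype.sum_equiv (Equiv.subLeft c) _ _ fun _ => rfl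
  simp only [one_sub_mul, mul_one_sub, sum_sub_distrib, sum_const, card_univ, nsmul_eq_mul,
    mul_one, hadd, hsub, sum_quadraticChar_add_mul_quadraticChar_sub hF hc]
  ring

lemma one_sub_quadraticChar_of_ne_zero {a : F} (ha : a ≠ 0) :
    1 - quadraticChar F a = if IsSquare a then 0 else 2 := by
  split_ifs with hsq
  · rw [(quadraticChar_one_iff_isSquare ha).mpr hsq, sub_self]
  · rw [quadraticChar_neg_one_iff_not_isSquare.mpr hsq]
    norm_num

lemma one_sub_quadraticChar_mul_one_sub_quadraticChar {a b : F} (ha : a ≠ 0) (hb : b ≠ 0) :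
    (1 - quadraticChar F a) * (1 - quadraticChar F b) =
      if ¬IsSquare a ∧ ¬IsSquare b then 4 else 0 := by
  rw [one_sub_quadraticChar_of_ne_zero ha, one_sub_quadraticChar_of_ne_zero hb]
  split_ifs <;> simp_all

open Classical in
lemma one_sub_quadraticChar_two_add_mul_one_sub_quadraticChar_two_sub (hF : ringChar F ≠ 2)
    (α : F) :
    (1 - quadraticChar F (2 + α)) * (1 - quadraticChar F (2 - α)) =
      if IsBadTrace α then 4 else 0 := by
  have hχ4 : quadraticChar F (2 + 2) = 1 := by
    rw [← two_mul, ← pow_two]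
    exact quadraticChar_sq_one' (Ring.two_ne_zero hF)
  by_cases h2 : α = 2
  · subst h2
    simp [IsBadTrace, hχ4]
  by_cases hm2 : α = -2
  · subst hm2
    simp [IsBadTrace, hχ4]
  rw [one_sub_quadraticChar_mul_one_sub_quadraticChar
    (fun h => hm2 (by linear_combination h)) (fun h => h2 (by linear_combination -h))]
  simp [IsBadTrace, h2, hm2]

lemma four_mul_ncard_isBadTrace (hF : ringChar F ≠ 2) :
    4 * ({α : F | IsBadTrace α}.ncard : ℤ) = Fintype.card F - quadraticChar F (-1) := by
  classical
  rw [Set.ncard_eq_toFinset_card', Set.toFinset_ofPred,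
    ← sum_one_sub_quadraticChar_add_mul_one_sub_quadraticChar_sub hF (Ring.two_ne_zero hF),
    Fintype.sum_congr _ _ (one_sub_quadraticChar_two_add_mul_one_sub_quadraticChar_two_sub hF),
    ← sum_filter, sum_const, nsmul_eq_mul, mul_comm]

end QuadraticChar

theorem card_bad_traces_general
    {F : Type*} [Field F] [Fintype F] (hodd : Odd (Fintype.card F)) :
    (Fintype.card F % 4 = 1 →
      {α : F | α ≠ 2 ∧ α ≠ -2 ∧ ¬IsSquare (2 + α) ∧ ¬IsSquare (2 - α)}.ncard =
        (Fintype.card F - 1) / 4) ∧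
    (Fintype.card F % 4 = 3 →
      {α : F | α ≠ 2 ∧ α ≠ -2 ∧ ¬IsSquare (2 + α) ∧ ¬IsSquare (2 - α)}.ncard =
        (Fintype.card F + 1) / 4) := by
  classical
  have hF : ringChar F ≠ 2 := fun h =>
    Nat.not_even_iff_odd.mpr hodd (Nat.even_iff.mpr (FiniteField.even_card_of_char_two h))
  have key := four_mul_ncard_isBadTrace hF
  rw [quadraticChar_neg_one hF] at key
  refine ⟨fun h1 => ?_, fun h3 => ?_⟩
  · rw [ZMod.χ₄_nat_one_mod_four h1] at key
    change {α : F | IsBadTrace α}.ncard = _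
    omega
  · rw [ZMod.χ₄_nat_three_mod_four h3] at key
    change {α : F | IsBadTrace α}.ncard = _
    omega

/-- For odd `q`, the number of bad traces `α` (i.e. `α ≠ ±2` and neither `2 + α` nor
`2 - α` is a square in `F_q`) is `(q - 1)/4` if `q ≡ 1 (mod 4)` and `(q + 1)/4` if
`q ≡ 3 (mod 4)`. -/
theorem card_bad_traces
    {F : Type*} [Field F] [Fintype F] [DecidableEq F] (hodd : Odd (Fintype.card F)) :
    (Fintype.card F % 4 = 1 →
      {α : F | α ≠ 2 ∧ α ≠ -2 ∧ ¬IsSquare (2 + α) ∧ ¬IsSquare (2 - α)}.ncard =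
        (Fintype.card F - 1) / 4) ∧
    (Fintype.card F % 4 = 3 →
      {α : F | α ≠ 2 ∧ α ≠ -2 ∧ ¬IsSquare (2 + α) ∧ ¬IsSquare (2 - α)}.ncard =
        (Fintype.card F + 1) / 4) :=
  card_bad_traces_general hodd
end
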